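/- Super-uniformity inequality (second inequality of Lemma 2): under independence of the p-values P_1,...,P_T, monotonicity of the rules f_t and g_t, and super-uniformity of each null p-value, for any coordinatewise non-decreasing function g: {0,1}^T → (0,∞) and any t ≤ T with t ∈ H⁰, one has E[α_t/g(R_{1:T}) | F^{t-1}] ≥ E[1{P_t ≤ α_t}/g(R_{1:T}) | F^{t-1}] almost surely. -/

import Mathlib

/-!
Let `Y` be the vector of p-values with `P_t` replaced by `0`. It is independent of `P_t`, and it
determines both the history `H_t` before `t` (so `α_t = a(Y)` for a function `a`) and a rejection
vector `R(Y)`. Lowering a p-value can only add rejections and candidacies, and the rules are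
monotone, so `R ≤ R(Y)`; on `{P_t ≤ α_t}` the two agree, because then setting `P_t` to `0`
changes no decision.
For an event `{H_t ∈ B}` of `F^{t-1}`, with `w(Y) = 1{H_t(Y) ∈ B} / g(R(Y))`, this gives
`E[1{H_t ∈ B} 1{P_t ≤ α_t} / g(R)] = E[1{P_t ≤ a(Y)} w(Y)] ≤ E[a(Y) w(Y)]`
`≤ E[1{H_t ∈ B} α_t / g(R)]`, where the middle step integrates out `P_t` first and uses its
super-uniformity.
-/

open MeasureTheory ProbabilityTheory

/-- The rejection-and-candidacy indicator history available just before testing hypothesis `t`: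
the pair of indicators `R_j = 1{P_j ≤ α_j}` and `C_j = 1{P_j ≤ λ_j}` for `j < t`,
encoded as a pair of boolean sequences. -/
noncomputable def history {Ω : Type*} (P alpha lam : ℕ → Ω → ℝ) (t : ℕ) (ω : Ω) :
    (ℕ → Bool) × (ℕ → Bool) :=
  (fun j => decide (j < t ∧ P j ω ≤ alpha j ω), fun j => decide (j < t ∧ P j ω ≤ lam j ω))

/-- The full vector of rejection indicators `R_{1:T}`, encoded as a boolean sequence
supported on the indices `j < T`. -/
noncomputable def rejVector {Ω : Type*} (P alpha : ℕ → Ω → ℝ) (T : ℕ) (ω : Ω) : ℕ → Bool :=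
  fun j => decide (j < T ∧ P j ω ≤ alpha j ω)

section RuleHistory

variable (f g' : ℕ → (ℕ → Bool) × (ℕ → Bool) → ℝ)

/-- `history` recomputed from the rules `f`, `g'` for an arbitrary sequence `p` of p-values, so that
it can be evaluated at modified p-values. -/
noncomputable def ruleHistory (p : ℕ → ℝ) : ℕ → (ℕ → Bool) × (ℕ → Bool)
  | 0 => (fun _ => false, fun _ => false)
  | s + 1 =>
    let H := ruleHistory p s
    (Function.update H.1 s (decide (p s ≤ f s H)), Function.update H.2 s (decide (p s ≤ g' s H)))

variable {f g'}

theorem ruleHistory_congr {p q : ℕ → ℝ} {s : ℕ} (h : ∀ j < s, p j = q j) :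
    ruleHistory f g' p s = ruleHistory f g' q s := by
  induction s with
  | zero => rfl
  | succ s ih => simp only [ruleHistory, ih fun j hj => h j (by omega), h s s.lt_succ_self]

theorem ruleHistory_antitone (hf : ∀ s, Monotone (f s)) (hg' : ∀ s, Monotone (g' s))
    {p q : ℕ → ℝ} {s : ℕ} (h : ∀ j < s, q j ≤ p j) :
    ruleHistory f g' p s ≤ ruleHistory f g' q s := by
  induction s with
  | zero => exact le_rfl
  | succ s ih =>
    have hH := ih fun j hj => h j (by omega)
    have hs := h s s.lt_succ_self
    refine ⟨update_le_update_iff.2 ⟨?_, fun j _ => hH.1 j⟩,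
      update_le_update_iff.2 ⟨?_, fun j _ => hH.2 j⟩⟩
    · exact Bool.le_iff_imp.2 fun hp =>
        decide_eq_true (hs.trans ((of_decide_eq_true hp).trans (hf s hH)))
    · exact Bool.le_iff_imp.2 fun hp =>
        decide_eq_true (hs.trans ((of_decide_eq_true hp).trans (hg' s hH)))

theorem ruleHistory_eq_of_le_thresholds {p q : ℕ → ℝ} {t s : ℕ}
    (h : ∀ j < s, j ≠ t → p j = q j)
    (hp : p t ≤ f t (ruleHistory f g' p t) ∧ p t ≤ g' t (ruleHistory f g' p t))
    (hq : q t ≤ f t (ruleHistory f g' p t) ∧ q t ≤ g' t (ruleHistory f g' p t)) :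
    ruleHistory f g' p s = ruleHistory f g' q s := by
  induction s with
  | zero => rfl
  | succ s ih =>
    have hH := ih fun j hj => h j (by omega)
    have hdec :
        decide (p s ≤ f s (ruleHistory f g' p s)) = decide (q s ≤ f s (ruleHistory f g' p s)) ∧
          decide (p s ≤ g' s (ruleHistory f g' p s)) =
            decide (q s ≤ g' s (ruleHistory f g' p s)) := by
      rcases eq_or_ne s t with rfl | hst
      · simp [hp, hq]
      · simp [h s s.lt_succ_self hst]
    simp only [ruleHistory, ← hH, hdec]

theorem history_eq_ruleHistory {Ω : Type*} {P alpha lam : ℕ → Ω → ℝ}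
    (hpreda : ∀ s ω, alpha s ω = f s (history P alpha lam s ω))
    (hpredl : ∀ s ω, lam s ω = g' s (history P alpha lam s ω)) (s : ℕ) (ω : Ω) :
    history P alpha lam s ω = ruleHistory f g' (fun j => P j ω) s := by
  induction s with
  | zero => simp [history, ruleHistory]
  | succ s ih =>
    simp only [ruleHistory, ← ih, ← hpreda, ← hpredl]
    ext j <;> by_cases hj : j = s <;> simp [history, hj, le_iff_lt_or_eq]

/-- Measurability for the discrete σ-algebra on histories, so that every function of the history
(such as a rule `f s`) is measurable. -/
theorem measurable_ruleHistory {Ω : Type*} [MeasurableSpace Ω] {p : Ω → ℕ → ℝ}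
    (hp : ∀ j, Measurable fun ω => p ω j) (s : ℕ) :
    Measurable[_, ⊤] fun ω => ruleHistory f g' (p ω) s := by
  induction s with
  | zero => exact measurable_const
  | succ s ih =>
    set H := fun ω => ruleHistory f g' (p ω) s
    have hthr (F : (ℕ → Bool) × (ℕ → Bool) → ℝ) : MeasurableSet {ω | p ω s ≤ F (H ω)} :=
      measurableSet_le (hp s) (measurable_from_top.comp ih)
    set U : Bool → Bool → Ω → (ℕ → Bool) × (ℕ → Bool) := fun b c ω =>
      (Function.update (H ω).1 s b, Function.update (H ω).2 s c)
    have hU (b c : Bool) : Measurable[_, ⊤] (U b c) :=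
      (@measurable_from_top _ _ ⊤ fun K : (ℕ → Bool) × (ℕ → Bool) =>
        (Function.update K.1 s b, Function.update K.2 s c)).comp ih
    have hsplit : (fun ω => ruleHistory f g' (p ω) (s + 1)) = fun ω =>
        if p ω s ≤ f s (H ω) then
          if p ω s ≤ g' s (H ω) then U true true ω else U true false ω
        else
          if p ω s ≤ g' s (H ω) then U false true ω else U false false ω := by
      funext ω
      simp only [ruleHistory, H, U]
      split_ifs <;> simp [*]
    rw [hsplit]
    exact Measurable.ite (hthr _) (Measurable.ite (hthr _) (hU _ _) (hU _ _))
      (Measurable.ite (hthr _) (hU _ _) (hU _ _))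

end RuleHistory

/-- `p` with `p t` set to `0`, and also truncated to `0` from index `T` on, so that it only depends
on the independent p-values `p j`, `j < T`, `j ≠ t`. -/
def leaveOneOut (T t : ℕ) (p : ℕ → ℝ) : ℕ → ℝ := fun j => if j < T ∧ j ≠ t then p j else 0

section LeaveOneOut

variable {f g' : ℕ → (ℕ → Bool) × (ℕ → Bool) → ℝ} {T t : ℕ} {p : ℕ → ℝ}

theorem ruleHistory_leaveOneOut_of_le (ht : t ≤ T) :
    ruleHistory f g' (leaveOneOut T t p) t = ruleHistory f g' p t :=
  ruleHistory_congr fun j hj => by simp [leaveOneOut, hj.ne, hj.trans_le ht]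

theorem ruleHistory_le_ruleHistory_leaveOneOut (hf : ∀ s, Monotone (f s))
    (hg' : ∀ s, Monotone (g' s)) (hp : 0 ≤ p t) :
    ruleHistory f g' p T ≤ ruleHistory f g' (leaveOneOut T t p) T :=
  ruleHistory_antitone hf hg' fun j hj => by
    by_cases hjt : j = t
    · simpa [leaveOneOut, hjt] using hp
    · simp [leaveOneOut, hj, hjt]

theorem ruleHistory_leaveOneOut_eq (hp : 0 ≤ p t) (hpf : p t ≤ f t (ruleHistory f g' p t))
    (hpg : p t ≤ g' t (ruleHistory f g' p t)) :
    ruleHistory f g' (leaveOneOut T t p) T = ruleHistory f g' p T :=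
  (ruleHistory_eq_of_le_thresholds (fun j hj hjt => by simp [leaveOneOut, hj, hjt]) ⟨hpf, hpg⟩
    (by simpa [leaveOneOut] using ⟨hp.trans hpf, hp.trans hpg⟩)).symm

variable {Ω : Type*} [MeasurableSpace Ω] {P : ℕ → Ω → ℝ}

theorem measurable_leaveOneOut (hP : ∀ j, Measurable (P j)) :
    Measurable fun ω => leaveOneOut T t fun j => P j ω :=
  measurable_pi_lambda _ fun j => by
    by_cases hj : j < T ∧ j ≠ t
    · simpa only [leaveOneOut, if_pos hj] using hP j
    · simpa only [leaveOneOut, if_neg hj] using measurable_const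

theorem ProbabilityTheory.iIndepFun.indepFun_leaveOneOut {μ : Measure Ω}
    (hP : ∀ j, Measurable (P j)) (hindep : iIndepFun (fun i : Fin T => P i.1) μ) (ht : t < T) :
    IndepFun (P t) (fun ω => leaveOneOut T t fun j => P j ω) μ := by
  set t' : Fin T := ⟨t, ht⟩
  set extend : (({t'}ᶜ : Finset (Fin T)) → ℝ) → ℕ → ℝ := fun v j =>
    if h : j < T ∧ j ≠ t then v ⟨⟨j, h.1⟩, by simp [t', Fin.ext_iff, h.2]⟩ else 0
  have hextend : Measurable extend := measurable_pi_lambda _ fun j => by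
    by_cases h : j < T ∧ j ≠ t
    · simpa only [extend, dif_pos h] using measurable_pi_apply _
    · simpa only [extend, dif_neg h] using measurable_const
  convert (hindep.indepFun_finset {t'} {t'}ᶜ disjoint_compl_right fun i => hP i).comp
    (measurable_pi_apply ⟨t', Finset.mem_singleton_self t'⟩) hextend using 1
  · rfl
  funext ω j
  simp only [leaveOneOut, extend, Function.comp_apply]
  split_ifs <;> rfl

end LeaveOneOut

section SuperUniform

variable {Ω E : Type*} [MeasurableSpace Ω] [MeasurableSpace E] {μ : Measure Ω}

def SuperUniform (X : Ω → ℝ) (μ : Measure Ω) : Prop :=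
  ∀ u, μ {ω | X ω ≤ u} ≤ ENNReal.ofReal u

theorem SuperUniform.of_Icc [IsProbabilityMeasure μ] {X : Ω → ℝ}
    (hX : ∀ u ∈ Set.Icc (0 : ℝ) 1, μ {ω | X ω ≤ u} ≤ ENNReal.ofReal u) : SuperUniform X μ := by
  intro u
  rcases lt_or_ge u 0 with hu | hu
  · calc μ {ω | X ω ≤ u} ≤ μ {ω | X ω ≤ 0} := measure_mono fun ω hω => le_trans hω hu.le
      _ ≤ ENNReal.ofReal 0 := hX 0 ⟨le_rfl, zero_le_one⟩
      _ ≤ ENNReal.ofReal u := by simp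
  rcases le_or_gt u 1 with hu1 | hu1
  · exact hX u ⟨hu, hu1⟩
  · exact prob_le_one.trans (ENNReal.one_le_ofReal.2 hu1.le)

variable [IsFiniteMeasure μ] {X : Ω → ℝ} {Y : Ω → E}

theorem SuperUniform.lintegral_ite_le (hX : SuperUniform X μ) (hXm : Measurable X)
    (hYm : Measurable Y) (hXY : IndepFun X Y μ) {a : E → ℝ} (ha : Measurable a)
    {h : E → ENNReal} (hh : Measurable h) :
    ∫⁻ ω, (if X ω ≤ a (Y ω) then h (Y ω) else 0) ∂μ ≤
      ∫⁻ ω, ENNReal.ofReal (a (Y ω)) * h (Y ω) ∂μ := by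
  set F : ℝ × E → ENNReal := fun z => if z.1 ≤ a z.2 then h z.2 else 0
  have hF : Measurable F :=
    Measurable.ite (measurableSet_le measurable_fst (ha.comp measurable_snd))
      (hh.comp measurable_snd) measurable_const
  have hmap : μ.map (fun ω => (X ω, Y ω)) = (μ.map X).prod (μ.map Y) :=
    (indepFun_iff_map_prod_eq_prod_map_map hXm.aemeasurable hYm.aemeasurable).1 hXY
  have hsection (y : E) : ∫⁻ x, F (x, y) ∂μ.map X = h y * μ.map X (Set.Iic (a y)) := by
    rw [← lintegral_indicator_const measurableSet_Iic]
    rfl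
  calc ∫⁻ ω, (if X ω ≤ a (Y ω) then h (Y ω) else 0) ∂μ
      = ∫⁻ y, ∫⁻ x, F (x, y) ∂μ.map X ∂μ.map Y := by
        rw [← lintegral_prod_symm' F hF, ← hmap, lintegral_map hF (hXm.prodMk hYm)]
    _ ≤ ∫⁻ y, h y * ENNReal.ofReal (a y) ∂μ.map Y := by
        refine lintegral_mono fun y => ?_
        rw [hsection, Measure.map_apply hXm measurableSet_Iic]
        exact mul_le_mul_right (hX (a y)) _
    _ = ∫⁻ ω, ENNReal.ofReal (a (Y ω)) * h (Y ω) ∂μ := by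
        rw [lintegral_map (f := fun y => h y * ENNReal.ofReal (a y))
          (hh.mul (ENNReal.measurable_ofReal.comp ha)) hYm]
        simp_rw [mul_comm]

theorem SuperUniform.integral_ite_le (hX : SuperUniform X μ) (hXm : Measurable X)
    (hYm : Measurable Y) (hXY : IndepFun X Y μ) {a : E → ℝ} (ha : Measurable a)
    (ha0 : ∀ ω, 0 ≤ a (Y ω)) {h : E → ℝ} (hh : Measurable h) (hh0 : ∀ y, 0 ≤ h y)
    (hint : Integrable (fun ω => a (Y ω) * h (Y ω)) μ) :
    ∫ ω, (if X ω ≤ a (Y ω) then h (Y ω) else 0) ∂μ ≤ ∫ ω, a (Y ω) * h (Y ω) ∂μ := by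
  have hite : Measurable fun ω => if X ω ≤ a (Y ω) then h (Y ω) else 0 :=
    Measurable.ite (measurableSet_le hXm (ha.comp hYm)) (hh.comp hYm) measurable_const
  rw [integral_eq_lintegral_of_nonneg_ae (ae_of_all _ fun ω => by split_ifs <;> simp [hh0])
      hite.aestronglyMeasurable,
    integral_eq_lintegral_of_nonneg_ae (ae_of_all _ fun ω => mul_nonneg (ha0 ω) (hh0 _))
      hint.aestronglyMeasurable]
  refine ENNReal.toReal_mono hint.lintegral_lt_top.ne ?_
  simp only [apply_ite ENNReal.ofReal, ENNReal.ofReal_zero, ENNReal.ofReal_mul (ha0 _)]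
  exact hX.lintegral_ite_le hXm hYm hXY ha (ENNReal.measurable_ofReal.comp hh)

theorem SuperUniform.integral_ite_le_of_le (hX : SuperUniform X μ) (hXm : Measurable X)
    (hYm : Measurable Y) (hXY : IndepFun X Y μ) {a : E → ℝ} (ha : Measurable a)
    (ha0 : ∀ ω, 0 ≤ a (Y ω)) {W : Ω → ℝ} {w : E → ℝ} (hw : Measurable w) (hw0 : ∀ y, 0 ≤ w y)
    (hwW : ∀ ω, w (Y ω) ≤ W ω) (hWw : ∀ ω, X ω ≤ a (Y ω) → W ω = w (Y ω))
    (hint : Integrable (fun ω => a (Y ω) * W ω) μ) :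
    ∫ ω, (if X ω ≤ a (Y ω) then W ω else 0) ∂μ ≤ ∫ ω, a (Y ω) * W ω ∂μ := by
  have hle (ω : Ω) : a (Y ω) * w (Y ω) ≤ a (Y ω) * W ω := mul_le_mul_of_nonneg_left (hwW ω) (ha0 ω)
  have hint' : Integrable (fun ω => a (Y ω) * w (Y ω)) μ :=
    hint.mono' ((ha.comp hYm).mul (hw.comp hYm)).aestronglyMeasurable (ae_of_all _ fun ω => by
      rw [Real.norm_of_nonneg (mul_nonneg (ha0 ω) (hw0 _))]; exact hle ω)
  calc ∫ ω, (if X ω ≤ a (Y ω) then W ω else 0) ∂μ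
      = ∫ ω, (if X ω ≤ a (Y ω) then w (Y ω) else 0) ∂μ :=
        integral_congr_ae (ae_of_all _ fun ω => by dsimp only; split_ifs with h <;> simp [hWw ω, h])
    _ ≤ ∫ ω, a (Y ω) * w (Y ω) ∂μ := hX.integral_ite_le hXm hYm hXY ha ha0 hw hw0 hint'
    _ ≤ ∫ ω, a (Y ω) * W ω ∂μ := integral_mono hint' hint hle

end SuperUniform

theorem condExp_ae_le_of_forall_setIntegral_le {Ω : Type*} {m m0 : MeasurableSpace Ω}
    {μ : Measure Ω} (hm : m ≤ m0) [SigmaFinite (μ.trim hm)] {f g : Ω → ℝ}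
    (hf : Integrable f μ) (hg : Integrable g μ)
    (hfg : ∀ s, MeasurableSet[m] s → ∫ x in s, f x ∂μ ≤ ∫ x in s, g x ∂μ) :
    μ[f|m] ≤ᵐ[μ] μ[g|m] := by
  refine ae_le_of_ae_le_trim (hm := hm) <| ae_le_of_forall_setIntegral_le
    (integrable_condExp.trim hm stronglyMeasurable_condExp)
    (integrable_condExp.trim hm stronglyMeasurable_condExp) fun s hs _ => ?_
  rw [← setIntegral_trim hm stronglyMeasurable_condExp hs,
    ← setIntegral_trim hm stronglyMeasurable_condExp hs,
    setIntegral_condExp hm hf hs, setIntegral_condExp hm hg hs]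
  exact hfg s hs

theorem integrable_div_of_bounds {Ω : Type*} [MeasurableSpace Ω] {μ : Measure Ω}
    [IsFiniteMeasure μ] {u v : Ω → ℝ} {c : ℝ} (hum : Measurable u) (hvm : Measurable v)
    (hc : 0 < c) (hu : ∀ ω, u ω ∈ Set.Icc 0 1) (hv : ∀ ω, c ≤ v ω) :
    Integrable (fun ω => u ω / v ω) μ :=
  Integrable.of_bound (hum.div hvm).aestronglyMeasurable c⁻¹ (ae_of_all _ fun ω => by
    rw [Real.norm_of_nonneg (div_nonneg (hu ω).1 (hc.trans_le (hv ω)).le), ← one_div]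
    exact div_le_div₀ zero_le_one (hu ω).2 hc (hv ω))

section OnlineTesting

variable {Ω : Type*} {T t : ℕ} {P alpha lam : ℕ → Ω → ℝ}
  {f g' : ℕ → (ℕ → Bool) × (ℕ → Bool) → ℝ} {g : (ℕ → Bool) → ℝ}

theorem history_eq_ruleHistory_leaveOneOut
    (hpreda : ∀ s ω, alpha s ω = f s (history P alpha lam s ω))
    (hpredl : ∀ s ω, lam s ω = g' s (history P alpha lam s ω)) (ht : t ≤ T) (ω : Ω) :
    history P alpha lam t ω = ruleHistory f g' (leaveOneOut T t fun j => P j ω) t := by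
  rw [history_eq_ruleHistory hpreda hpredl, ruleHistory_leaveOneOut_of_le ht]

theorem rejVector_le_leaveOneOut
    (hpreda : ∀ s ω, alpha s ω = f s (history P alpha lam s ω))
    (hpredl : ∀ s ω, lam s ω = g' s (history P alpha lam s ω))
    (hfmono : ∀ s, Monotone (f s)) (hg'mono : ∀ s, Monotone (g' s)) {ω : Ω} (hP0 : 0 ≤ P t ω) :
    rejVector P alpha T ω ≤ (ruleHistory f g' (leaveOneOut T t fun j => P j ω) T).1 :=
  (history_eq_ruleHistory hpreda hpredl T ω ▸
    ruleHistory_le_ruleHistory_leaveOneOut hfmono hg'mono hP0).1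

theorem rejVector_eq_leaveOneOut
    (hpreda : ∀ s ω, alpha s ω = f s (history P alpha lam s ω))
    (hpredl : ∀ s ω, lam s ω = g' s (history P alpha lam s ω)) {ω : Ω} (hP0 : 0 ≤ P t ω)
    (halam : alpha t ω ≤ lam t ω) (hle : P t ω ≤ alpha t ω) :
    rejVector P alpha T ω = (ruleHistory f g' (leaveOneOut T t fun j => P j ω) T).1 := by
  have hH := history_eq_ruleHistory hpreda hpredl
  rw [ruleHistory_leaveOneOut_eq hP0 (by rwa [← hH, ← hpreda])
    (by rw [← hH, ← hpredl]; exact hle.trans halam), ← hH]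
  rfl

variable [MeasurableSpace Ω] {μ : Measure Ω}

theorem measurable_history (hPmeas : ∀ j, Measurable (P j))
    (hpreda : ∀ s ω, alpha s ω = f s (history P alpha lam s ω))
    (hpredl : ∀ s ω, lam s ω = g' s (history P alpha lam s ω)) (s : ℕ) :
    Measurable[_, ⊤] (history P alpha lam s) := by
  rw [funext (history_eq_ruleHistory hpreda hpredl s)]
  exact measurable_ruleHistory (fun j => hPmeas j) s

theorem setIntegral_preimage_history_le [IsFiniteMeasure μ] (hPmeas : ∀ j, Measurable (P j))
    (hP0 : ∀ ω, 0 ≤ P t ω) (hindep : iIndepFun (fun i : Fin T => P i.1) μ)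
    (hnull : SuperUniform (P t) μ) (ha0 : ∀ ω, 0 ≤ alpha t ω)
    (halam : ∀ ω, alpha t ω ≤ lam t ω)
    (hpreda : ∀ s ω, alpha s ω = f s (history P alpha lam s ω))
    (hpredl : ∀ s ω, lam s ω = g' s (history P alpha lam s ω))
    (hfmono : ∀ s, Monotone (f s)) (hg'mono : ∀ s, Monotone (g' s))
    (hgpos : ∀ x, 0 < g x) (hgmono : Monotone g) (ht : t < T)
    (hint : Integrable (fun ω => alpha t ω / g (rejVector P alpha T ω)) μ)
    (B : Set ((ℕ → Bool) × (ℕ → Bool))) :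
    ∫ ω in history P alpha lam t ⁻¹' B,
        (if P t ω ≤ alpha t ω then (1 : ℝ) else 0) / g (rejVector P alpha T ω) ∂μ ≤
      ∫ ω in history P alpha lam t ⁻¹' B, alpha t ω / g (rejVector P alpha T ω) ∂μ := by
  set S := history P alpha lam t ⁻¹' B
  set Y : Ω → ℕ → ℝ := fun ω => leaveOneOut T t fun j => P j ω
  set a : (ℕ → ℝ) → ℝ := fun y => f t (ruleHistory f g' y t)
  set w : (ℕ → ℝ) → ℝ := fun y => B.indicator 1 (ruleHistory f g' y t) / g (ruleHistory f g' y T).1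
  set W : Ω → ℝ := S.indicator fun ω => (g (rejVector P alpha T ω))⁻¹
  have hHY := history_eq_ruleHistory_leaveOneOut hpreda hpredl ht.le
  have hS (ω : Ω) : ω ∈ S ↔ ruleHistory f g' (Y ω) t ∈ B := by rw [Set.mem_preimage, hHY]
  have haY (ω : Ω) : alpha t ω = a (Y ω) := by rw [hpreda, hHY]
  have hmeas (F : (ℕ → Bool) × (ℕ → Bool) → ℝ) (s : ℕ) :
      Measurable fun y : ℕ → ℝ => F (ruleHistory f g' y s) :=
    measurable_from_top.comp (measurable_ruleHistory measurable_pi_apply s)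
  have hSm : MeasurableSet S :=
    measurable_history hPmeas hpreda hpredl t MeasurableSpace.measurableSet_top
  have hw0 (y : ℕ → ℝ) : 0 ≤ w y :=
    div_nonneg (Set.indicator_nonneg (fun _ _ => zero_le_one) _) (hgpos _).le
  have hwW (ω : Ω) : w (Y ω) ≤ W ω := by
    by_cases hω : ω ∈ S
    · simp only [W, w, Set.indicator_of_mem hω, Set.indicator_of_mem ((hS ω).1 hω),
        Pi.one_apply, one_div]
      exact inv_anti₀ (hgpos _) (hgmono (rejVector_le_leaveOneOut hpreda hpredl hfmono hg'mono
        (hP0 ω)))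
    · simp [W, w, Set.indicator_of_notMem hω, Set.indicator_of_notMem (mt (hS ω).2 hω)]
  have hWw (ω : Ω) (hle : P t ω ≤ a (Y ω)) : W ω = w (Y ω) := by
    by_cases hω : ω ∈ S
    · simp [W, w, Y, Set.indicator_of_mem hω, Set.indicator_of_mem ((hS ω).1 hω),
        rejVector_eq_leaveOneOut hpreda hpredl (hP0 ω) (halam ω) (by rwa [haY])]
    · simp [W, w, Set.indicator_of_notMem hω, Set.indicator_of_notMem (mt (hS ω).2 hω)]
  have hWZ (ω : Ω) :
      a (Y ω) * W ω = S.indicator (fun ω => alpha t ω / g (rejVector P alpha T ω)) ω := by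
    by_cases hω : ω ∈ S <;> simp [W, hω, haY, div_eq_mul_inv]
  rw [← integral_indicator hSm, ← integral_indicator hSm]
  calc _ = ∫ ω, (if P t ω ≤ a (Y ω) then W ω else 0) ∂μ := by
        refine integral_congr_ae (ae_of_all _ fun ω => ?_)
        dsimp only
        rw [← haY]
        by_cases hω : ω ∈ S <;> simp [W, hω, div_eq_mul_inv]
    _ ≤ ∫ ω, a (Y ω) * W ω ∂μ :=
        hnull.integral_ite_le_of_le (hPmeas t) (measurable_leaveOneOut hPmeas)
          (hindep.indepFun_leaveOneOut hPmeas ht) (hmeas _ t) (fun ω => (ha0 ω).trans_eq (haY ω))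
          ((hmeas _ t).div (hmeas (fun H => g H.1) T)) hw0 hwW hWw
          ((hint.indicator hSm).congr (ae_of_all _ fun ω => (hWZ ω).symm))
    _ = _ := integral_congr_ae (ae_of_all _ hWZ)

end OnlineTesting

theorem lemma2_second_inequality_general {Ω : Type*} [m0 : MeasurableSpace Ω]
    (μ : Measure Ω) [IsProbabilityMeasure μ]
    (T : ℕ) (P alpha lam : ℕ → Ω → ℝ) (H0 : Set ℕ)
    (hPmeas : ∀ j, Measurable (P j)) (hP01 : ∀ j ω, P j ω ∈ Set.Icc (0 : ℝ) 1)
    -- the p-values `P_1, ..., P_T` are independent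
    (hindep : ProbabilityTheory.iIndepFun (m := fun _ : Fin T => (inferInstance : MeasurableSpace ℝ))
      (fun i : Fin T => P i.1) μ)
    -- each null p-value is super-uniform
    (hnull : ∀ j ∈ H0, ∀ u ∈ Set.Icc (0 : ℝ) 1, μ {ω | P j ω ≤ u} ≤ ENNReal.ofReal u)
    (ha01 : ∀ j ω, alpha j ω ∈ Set.Ioo (0 : ℝ) 1)
    (halam : ∀ j ω, alpha j ω ≤ lam j ω)
    -- predictability and monotonicity of the rules producing `α_t` and `λ_t`
    (f g' : ℕ → (ℕ → Bool) × (ℕ → Bool) → ℝ)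
    (hpreda : ∀ s ω, alpha s ω = f s (history P alpha lam s ω))
    (hpredl : ∀ s ω, lam s ω = g' s (history P alpha lam s ω))
    (hfmono : ∀ s, Monotone (f s)) (hg'mono : ∀ s, Monotone (g' s))
    -- `g` is a positive coordinatewise non-decreasing function of the rejection vector
    (g : (ℕ → Bool) → ℝ) (hgpos : ∀ x, 0 < g x) (hgmono : Monotone g)
    (t : ℕ) (ht : t < T) (htnull : t ∈ H0) :
    ∀ᵐ ω ∂μ,
      (μ[fun ω' => (if P t ω' ≤ alpha t ω' then (1 : ℝ) else 0) / g (rejVector P alpha T ω') |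
          MeasurableSpace.comap (history P alpha lam t) inferInstance]) ω
        ≤ (μ[fun ω' => alpha t ω' / g (rejVector P alpha T ω') |
          MeasurableSpace.comap (history P alpha lam t) inferInstance]) ω := by
  have hhist := measurable_history hPmeas hpreda hpredl
  have hm : MeasurableSpace.comap (history P alpha lam t) inferInstance ≤ m0 :=
    ((hhist t).mono le_rfl le_top).comap_le
  have halpha : Measurable (alpha t) := by
    rw [funext (hpreda t)]
    exact (measurable_from_top (f := f t)).comp (hhist t)
  have hrej : Measurable fun ω => g (rejVector P alpha T ω) :=
    (measurable_from_top (f := fun H : (ℕ → Bool) × (ℕ → Bool) => g H.1)).comp (hhist T)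
  have hgbot (ω : Ω) : g ⊥ ≤ g (rejVector P alpha T ω) := hgmono bot_le
  have hZ := integrable_div_of_bounds (μ := μ) halpha hrej (hgpos ⊥)
    (fun ω => Set.Ioo_subset_Icc_self (ha01 t ω)) hgbot
  have hX := integrable_div_of_bounds (μ := μ)
    (u := fun ω => if P t ω ≤ alpha t ω then (1 : ℝ) else 0) (Measurable.ite
    (measurableSet_le (hPmeas t) halpha) measurable_const measurable_const) hrej (hgpos ⊥)
    (fun ω => by split_ifs <;> simp) hgbot
  refine condExp_ae_le_of_forall_setIntegral_le hm hX hZ ?_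
  rintro _ ⟨B, -, rfl⟩
  exact setIntegral_preimage_history_le hPmeas (fun ω => (hP01 t ω).1) hindep
    (SuperUniform.of_Icc (hnull t htnull)) (fun ω => (ha01 t ω).1.le) (halam t) hpreda hpredl
    hfmono hg'mono hgpos hgmono ht hZ B

/-- Super-uniformity inequality (second inequality of Lemma 2): under independence of the
p-values `P_1, ..., P_T`, monotonicity of the rules, and super-uniformity of each null
p-value, for any coordinatewise non-decreasing positive function `g` of the rejection
vector and any null index `t < T`,
`E[α_t / g(R_{1:T}) | F^{t-1}] ≥ E[1{P_t ≤ α_t} / g(R_{1:T}) | F^{t-1}]`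
almost surely. -/
theorem lemma2_second_inequality {Ω : Type*} [m0 : MeasurableSpace Ω]
    (μ : Measure Ω) [IsProbabilityMeasure μ]
    (T : ℕ) (P alpha lam : ℕ → Ω → ℝ) (H0 : Set ℕ)
    (hPmeas : ∀ j, Measurable (P j)) (hP01 : ∀ j ω, P j ω ∈ Set.Icc (0 : ℝ) 1)
    -- the p-values `P_1, ..., P_T` are independent
    (hindep : ProbabilityTheory.iIndepFun (m := fun _ : Fin T => (inferInstance : MeasurableSpace ℝ))
      (fun i : Fin T => P i.1) μ)
    -- each null p-value is super-uniform
    (hnull : ∀ j ∈ H0, ∀ u ∈ Set.Icc (0 : ℝ) 1, μ {ω | P j ω ≤ u} ≤ ENNReal.ofReal u)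
    (hameas : ∀ j, Measurable (alpha j)) (ha01 : ∀ j ω, alpha j ω ∈ Set.Ioo (0 : ℝ) 1)
    (hlmeas : ∀ j, Measurable (lam j)) (hl01 : ∀ j ω, lam j ω ∈ Set.Ioo (0 : ℝ) 1)
    (halam : ∀ j ω, alpha j ω ≤ lam j ω)
    -- predictability and monotonicity of the rules producing `α_t` and `λ_t`
    (f g' : ℕ → (ℕ → Bool) × (ℕ → Bool) → ℝ)
    (hpreda : ∀ s ω, alpha s ω = f s (history P alpha lam s ω))
    (hpredl : ∀ s ω, lam s ω = g' s (history P alpha lam s ω))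
    (hfmono : ∀ s, Monotone (f s)) (hg'mono : ∀ s, Monotone (g' s))
    -- `g` is a positive coordinatewise non-decreasing function of the rejection vector
    (g : (ℕ → Bool) → ℝ) (hgpos : ∀ x, 0 < g x) (hgmono : Monotone g)
    (t : ℕ) (ht : t < T) (htnull : t ∈ H0) :
    ∀ᵐ ω ∂μ,
      (μ[fun ω' => (if P t ω' ≤ alpha t ω' then (1 : ℝ) else 0) / g (rejVector P alpha T ω') |
          MeasurableSpace.comap (history P alpha lam t) inferInstance]) ω
        ≤ (μ[fun ω' => alpha t ω' / g (rejVector P alpha T ω') |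
          MeasurableSpace.comap (history P alpha lam t) inferInstance]) ω :=
  lemma2_second_inequality_general (m0 := m0) μ T P alpha lam H0 hPmeas hP01 hindep hnull ha01 halam
    f g' hpreda hpredl hfmono hg'mono g hgpos hgmono t ht htnull
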